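/- arXiv:2601.03523 — 2 statements merged into one kernel-verified Lean document; each statement's English description precedes it below -/
import Mathlib

section
/- Let f, g be Boolean functions on a finite variable set V of size n, with weights as in the hard-instance setting (E[P_x]=E[N_x]=1, Var=3, Cov(P_x,N_x)=−1, cross-variable independence). Then (4^n − 1)·(|A_{f∧g}| − 1) < Cov(W_f, W_g) ≤ (4^n − 1)·|A_{f∧g}|, and consequently |A_{f∧g}| = ⌈Cov(W_f, W_g) / (4^n − 1)⌉. -/
/-!
Independence across variables factors `E[W_a W_b]` into `∏ₓ E[·]`, where a coordinate on which
`a` and `b` agree contributes `E[P_x²] = E[N_x²] = 4` and one on which they differ contributes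
`E[P_x N_x] = 0`; likewise `E[W_a] = 1`. So the `W_a` are orthogonal with unit means, and
`Cov(W_f, W_g) = 4ⁿ |A_f ∩ A_g| - |A_f| |A_g|`. The number `|A_f| |A_g| - |A_f ∩ A_g|` of
off-diagonal pairs in `A_f × A_g` lies between `0` and `4ⁿ - 2ⁿ < 4ⁿ - 1`, which confines the
covariance to `((4ⁿ - 1)(k - 1), (4ⁿ - 1) k]` with `k = |A_f ∩ A_g|`.
-/

open MeasureTheory ProbabilityTheory

/-- Covariance: `Cov(U,V) = E[UV] - E[U]E[V]`. -/
noncomputable def cov {Ω : Type*} [MeasurableSpace Ω] (μ : Measure Ω) (U V : Ω → ℝ) : ℝ :=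
  (∫ ω, U ω * V ω ∂μ) - (∫ ω, U ω ∂μ) * (∫ ω, V ω ∂μ)

open Finset

namespace Finset

variable {α : Type*} [DecidableEq α]

theorem filter_product_fst_eq_snd (s t : Finset α) :
    (s ×ˢ t).filter (fun p => p.1 = p.2) = (s ∩ t).diag := by
  ext ⟨a, b⟩
  grind

theorem card_inter_le_card_mul_card (s t : Finset α) : #(s ∩ t) ≤ #s * #t := by
  rw [← diag_card, ← filter_product_fst_eq_snd, ← card_product]
  exact card_filter_le _ _

/-- Off-diagonal pairs of `s ×ˢ t` are off-diagonal pairs of the whole type. -/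
theorem card_mul_card_add_card_le [Fintype α] (s t : Finset α) :
    #s * #t + Fintype.card α ≤ #(s ∩ t) + Fintype.card α * Fintype.card α := by
  have hsplit := card_filter_add_card_filter_not (s := s ×ˢ t) (fun p => p.1 = p.2)
  rw [filter_product_fst_eq_snd, diag_card, card_product] at hsplit
  have hoff : ((s ×ˢ t).filter (fun p => ¬p.1 = p.2)) ⊆ (univ : Finset α).offDiag := by
    intro p hp
    simp only [mem_filter] at hp
    simpa using hp.2
  have := card_le_card hoff
  rw [offDiag_card, card_univ] at this
  have : Fintype.card α ≤ Fintype.card α * Fintype.card α := Nat.le_mul_self _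
  omega

end Finset

theorem Int.eq_ceil_div_of_bounds {D y : ℝ} {k : ℤ} (hD : 0 < D) (hlow : D * (k - 1) < y)
    (hup : y ≤ D * k) : k = ⌈y / D⌉ := by
  rw [eq_comm, Int.ceil_eq_iff, lt_div_iff₀ hD, div_le_iff₀ hD]
  constructor <;> linarith

section Covariance

variable {Ω : Type*} [MeasurableSpace Ω] {μ : Measure Ω}

theorem integral_mul_eq_cov_add (U V : Ω → ℝ) :
    ∫ ω, U ω * V ω ∂μ = cov μ U V + (∫ ω, U ω ∂μ) * (∫ ω, V ω ∂μ) := by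
  rw [cov]; ring

theorem cov_sum_sum_of_orthogonal [IsFiniteMeasure μ] {ι : Type*} [DecidableEq ι]
    {W : ι → Ω → ℝ} {c : ℝ} (hW : ∀ i, MemLp (W i) ⊤ μ) (hmean : ∀ i, ∫ ω, W i ω ∂μ = 1)
    (horth : ∀ i j, ∫ ω, W i ω * W j ω ∂μ = if i = j then c else 0) (s t : Finset ι) :
    cov μ (fun ω => ∑ i ∈ s, W i ω) (fun ω => ∑ j ∈ t, W j ω) = c * #(s ∩ t) - #s * #t := by
  have hint : ∀ i, Integrable (W i) μ := fun i => (hW i).integrable le_top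
  have hint₂ : ∀ i j, Integrable (fun ω => W i ω * W j ω) μ :=
    fun i j => (hint i).mul_of_top_left (hW j)
  have hsum : ∀ u : Finset ι, ∫ ω, ∑ i ∈ u, W i ω ∂μ = #u := fun u => by
    simp [integral_finsetSum u fun i _ => hint i, hmean]
  have hprod : ∫ ω, (∑ i ∈ s, W i ω) * (∑ j ∈ t, W j ω) ∂μ = c * #(s ∩ t) := by
    simp_rw [sum_mul_sum]
    rw [integral_finsetSum _ fun i _ => integrable_finsetSum _ fun j _ => hint₂ i j]
    simp_rw [integral_finsetSum _ fun j _ => hint₂ _ j, horth, sum_ite_eq, ← sum_filter,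
      sum_const, filter_mem_eq_inter, nsmul_eq_mul, mul_comm]
  rw [cov, hprod, hsum, hsum]

end Covariance

section Moments

variable {Ω : Type*} [MeasurableSpace Ω] {μ : Measure Ω} {P N : Ω → ℝ}

theorem integral_ite_mul_ite (hP : ∫ ω, P ω ∂μ = 1) (hN : ∫ ω, N ω ∂μ = 1)
    (hPP : cov μ P P = 3) (hNN : cov μ N N = 3) (hPN : cov μ P N = -1) (s t : Bool) :
    ∫ ω, (if s then P ω else N ω) * (if t then P ω else N ω) ∂μ = if s = t then 4 else 0 := by
  have hNP : ∫ ω, N ω * P ω ∂μ = ∫ ω, P ω * N ω ∂μ := by simp_rw [mul_comm]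
  cases s <;> cases t <;>
    simp only [Bool.false_eq_true, if_false, if_true, hNP, integral_mul_eq_cov_add, hP, hN, hPP,
      hNN, hPN] <;> norm_num

end Moments

section Weights

variable {Ω V : Type*} [MeasurableSpace Ω] [Fintype V] {μ : Measure Ω} {P N : V → Ω → ℝ}

theorem memLp_top_prod_ite (hP : ∀ x, MemLp (P x) ⊤ μ) (hN : ∀ x, MemLp (N x) ⊤ μ)
    (a : V → Bool) : MemLp (fun ω => ∏ x, if a x then P x ω else N x ω) ⊤ μ := by
  have hfactor : ∀ x ∈ univ, MemLp (fun ω => if a x then P x ω else N x ω) ⊤ μ := by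
    intro x _
    split_ifs
    exacts [hP x, hN x]
  simpa using MemLp.prod' hfactor

theorem integral_prod_ite (hPmeas : ∀ x, Measurable (P x)) (hNmeas : ∀ x, Measurable (N x))
    (hindep : iIndepFun (fun x ω => (P x ω, N x ω)) μ) (hPexp : ∀ x, ∫ ω, P x ω ∂μ = 1)
    (hNexp : ∀ x, ∫ ω, N x ω ∂μ = 1) (a : V → Bool) :
    ∫ ω, ∏ x, (if a x then P x ω else N x ω) ∂μ = 1 := by
  have := hindep.integral_fun_prod_comp (f := fun x (p : ℝ × ℝ) => if a x then p.1 else p.2)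
    (fun x => ((hPmeas x).prodMk (hNmeas x)).aemeasurable)
    (fun x => (continuous_if_const _ (fun _ => continuous_fst)
      (fun _ => continuous_snd)).aestronglyMeasurable)
  simp only at this
  rw [this]
  refine prod_eq_one fun x _ => ?_
  split_ifs
  exacts [hPexp x, hNexp x]

theorem integral_prod_ite_mul_prod_ite (hPmeas : ∀ x, Measurable (P x))
    (hNmeas : ∀ x, Measurable (N x)) (hindep : iIndepFun (fun x ω => (P x ω, N x ω)) μ)
    (hPexp : ∀ x, ∫ ω, P x ω ∂μ = 1) (hNexp : ∀ x, ∫ ω, N x ω ∂μ = 1)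
    (hPvar : ∀ x, cov μ (P x) (P x) = 3) (hNvar : ∀ x, cov μ (N x) (N x) = 3)
    (hPNcov : ∀ x, cov μ (P x) (N x) = -1) (a b : V → Bool) :
    ∫ ω, (∏ x, if a x then P x ω else N x ω) * (∏ x, if b x then P x ω else N x ω) ∂μ =
      if a = b then 4 ^ Fintype.card V else 0 := by
  have hsel : ∀ s : Bool, Continuous fun p : ℝ × ℝ => if s then p.1 else p.2 :=
    fun _ => continuous_if_const _ (fun _ => continuous_fst) (fun _ => continuous_snd)
  have := hindep.integral_fun_prod_comp
    (f := fun x (p : ℝ × ℝ) => (if a x then p.1 else p.2) * (if b x then p.1 else p.2))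
    (fun x => ((hPmeas x).prodMk (hNmeas x)).aemeasurable)
    (fun x => ((hsel (a x)).mul (hsel (b x))).aestronglyMeasurable)
  simp only at this
  simp_rw [← prod_mul_distrib, this, integral_ite_mul_ite (hPexp _) (hNexp _) (hPvar _)
    (hNvar _) (hPNcov _)]
  split_ifs with hab
  · simp [hab]
  · obtain ⟨x, hx⟩ := Function.ne_iff.mp hab
    exact prod_eq_zero (mem_univ x) (if_neg hx)

theorem cov_sum_prod_ite [IsFiniteMeasure μ] (hPmeas : ∀ x, Measurable (P x))
    (hNmeas : ∀ x, Measurable (N x)) (hPbdd : ∀ x, ∃ C, ∀ ω, |P x ω| ≤ C)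
    (hNbdd : ∀ x, ∃ C, ∀ ω, |N x ω| ≤ C) (hPexp : ∀ x, ∫ ω, P x ω ∂μ = 1)
    (hNexp : ∀ x, ∫ ω, N x ω ∂μ = 1) (hPvar : ∀ x, cov μ (P x) (P x) = 3)
    (hNvar : ∀ x, cov μ (N x) (N x) = 3) (hPNcov : ∀ x, cov μ (P x) (N x) = -1)
    (hindep : iIndepFun (fun x ω => (P x ω, N x ω)) μ) (A B : Finset (V → Bool)) :
    cov μ (fun ω => ∑ a ∈ A, ∏ x, (if a x then P x ω else N x ω))
        (fun ω => ∑ b ∈ B, ∏ x, (if b x then P x ω else N x ω)) =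
      4 ^ Fintype.card V * #(A ∩ B) - #A * #B := by
  have hmemLp : ∀ f : Ω → ℝ, Measurable f → (∃ C, ∀ ω, |f ω| ≤ C) → MemLp f ⊤ μ := by
    rintro f hf ⟨C, hC⟩
    exact memLp_top_of_bound hf.aestronglyMeasurable C (.of_forall hC)
  exact cov_sum_sum_of_orthogonal
    (memLp_top_prod_ite (fun x => hmemLp _ (hPmeas x) (hPbdd x))
      (fun x => hmemLp _ (hNmeas x) (hNbdd x)))
    (integral_prod_ite hPmeas hNmeas hindep hPexp hNexp)
    (integral_prod_ite_mul_prod_ite hPmeas hNmeas hindep hPexp hNexp hPvar hNvar hPNcov) A B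

end Weights

theorem model_count_from_cov_general {Ω V : Type*} [MeasurableSpace Ω] [Fintype V]
    (μ : Measure Ω) [IsProbabilityMeasure μ] (P N : V → Ω → ℝ)
    (hPmeas : ∀ x, Measurable (P x)) (hNmeas : ∀ x, Measurable (N x))
    (hPbdd : ∀ x, ∃ C, ∀ ω, |P x ω| ≤ C) (hNbdd : ∀ x, ∃ C, ∀ ω, |N x ω| ≤ C)
    (hPexp : ∀ x, (∫ ω, P x ω ∂μ) = 1) (hNexp : ∀ x, (∫ ω, N x ω ∂μ) = 1)
    (hPvar : ∀ x, cov μ (P x) (P x) = 3) (hNvar : ∀ x, cov μ (N x) (N x) = 3)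
    (hPNcov : ∀ x, cov μ (P x) (N x) = -1)
    (hindep : iIndepFun (fun x ω => (P x ω, N x ω)) μ)
    (hn : 1 ≤ Fintype.card V) (Af Ag : Finset (V → Bool)) :
    ((4 : ℝ) ^ (Fintype.card V) - 1) * (((Af ∩ Ag).card : ℝ) - 1) <
        cov μ (fun ω => ∑ a ∈ Af, ∏ x, (if a x then P x ω else N x ω))
              (fun ω => ∑ b ∈ Ag, ∏ x, (if b x then P x ω else N x ω)) ∧
      cov μ (fun ω => ∑ a ∈ Af, ∏ x, (if a x then P x ω else N x ω))
            (fun ω => ∑ b ∈ Ag, ∏ x, (if b x then P x ω else N x ω)) ≤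
        ((4 : ℝ) ^ (Fintype.card V) - 1) * ((Af ∩ Ag).card : ℝ) ∧
      ((Af ∩ Ag).card : ℤ) =
        ⌈cov μ (fun ω => ∑ a ∈ Af, ∏ x, (if a x then P x ω else N x ω))
               (fun ω => ∑ b ∈ Ag, ∏ x, (if b x then P x ω else N x ω)) /
          ((4 : ℝ) ^ (Fintype.card V) - 1)⌉ := by
  rw [cov_sum_prod_ite hPmeas hNmeas hPbdd hNbdd hPexp hNexp hPvar hNvar hPNcov hindep]
  have hinter : (#(Af ∩ Ag) : ℝ) ≤ #Af * #Ag := by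
    exact_mod_cast card_inter_le_card_mul_card Af Ag
  have hoff : (#Af * #Ag + 2 ^ Fintype.card V : ℝ) ≤ #(Af ∩ Ag) + 4 ^ Fintype.card V := by
    classical
    have := card_mul_card_add_card_le Af Ag
    rw [Fintype.card_fun, Fintype.card_bool, ← mul_pow] at this
    exact_mod_cast this
  have htwo : (2 : ℝ) ≤ 2 ^ Fintype.card V := le_self_pow₀ one_le_two (by omega)
  have hlow : ((4 : ℝ) ^ Fintype.card V - 1) * (#(Af ∩ Ag) - 1) <
      4 ^ Fintype.card V * #(Af ∩ Ag) - #Af * #Ag := by linarith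
  have hup : (4 : ℝ) ^ Fintype.card V * #(Af ∩ Ag) - #Af * #Ag ≤
      (4 ^ Fintype.card V - 1) * #(Af ∩ Ag) := by linarith
  exact ⟨hlow, hup, Int.eq_ceil_div_of_bounds (by linarith) (by exact_mod_cast hlow) hup⟩

theorem model_count_from_cov {Ω V : Type*} [MeasurableSpace Ω] [Fintype V] [DecidableEq V]
    (μ : Measure Ω) [IsProbabilityMeasure μ] (P N : V → Ω → ℝ)
    (hPmeas : ∀ x, Measurable (P x)) (hNmeas : ∀ x, Measurable (N x))
    (hPbdd : ∀ x, ∃ C, ∀ ω, |P x ω| ≤ C) (hNbdd : ∀ x, ∃ C, ∀ ω, |N x ω| ≤ C)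
    (hPexp : ∀ x, (∫ ω, P x ω ∂μ) = 1) (hNexp : ∀ x, (∫ ω, N x ω ∂μ) = 1)
    (hPvar : ∀ x, cov μ (P x) (P x) = 3) (hNvar : ∀ x, cov μ (N x) (N x) = 3)
    (hPNcov : ∀ x, cov μ (P x) (N x) = -1)
    (hindep : iIndepFun (fun x ω => (P x ω, N x ω)) μ)
    (hn : 1 ≤ Fintype.card V) (Af Ag : Finset (V → Bool)) :
    ((4 : ℝ) ^ (Fintype.card V) - 1) * (((Af ∩ Ag).card : ℝ) - 1) <
        cov μ (fun ω => ∑ a ∈ Af, ∏ x, (if a x then P x ω else N x ω))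
              (fun ω => ∑ b ∈ Ag, ∏ x, (if b x then P x ω else N x ω)) ∧
      cov μ (fun ω => ∑ a ∈ Af, ∏ x, (if a x then P x ω else N x ω))
            (fun ω => ∑ b ∈ Ag, ∏ x, (if b x then P x ω else N x ω)) ≤
        ((4 : ℝ) ^ (Fintype.card V) - 1) * ((Af ∩ Ag).card : ℝ) ∧
      ((Af ∩ Ag).card : ℤ) =
        ⌈cov μ (fun ω => ∑ a ∈ Af, ∏ x, (if a x then P x ω else N x ω))
               (fun ω => ∑ b ∈ Ag, ∏ x, (if b x then P x ω else N x ω)) /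
          ((4 : ℝ) ^ (Fintype.card V) - 1)⌉ :=
  model_count_from_cov_general μ P N hPmeas hNmeas hPbdd hNbdd hPexp hNexp hPvar hNvar hPNcov hindep
    hn Af Ag
end

section
/- Let V be partitioned as V = V^l ⊔ V^r. Suppose f = f^l ∧ f^r and g = g^l ∧ g^r where f^l, g^l are Boolean functions on V^l and f^r, g^r are Boolean functions on V^r. Then Cov(W_f^V, W_g^V) = Cov(W_{f^l}^{V^l}, W_{g^l}^{V^l})·Cov(W_{f^r}^{V^r}, W_{g^r}^{V^r}) + Cov(W_{f^l}^{V^l}, W_{g^l}^{V^l})·E[W_{f^r}^{V^r}]·E[W_{g^r}^{V^r}] + E[W_{f^l}^{V^l}]·E[W_{g^l}^{V^l}]·Cov(W_{f^r}^{V^r}, W_{g^r}^{V^r}). -/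
/-!
The model set of `fˡ ∧ fʳ` on `Vˡ ⊔ Vʳ` is the product of the model sets of `fˡ` and `fʳ`, so each
weighted count factors as `W_f = W_{fˡ} · W_{fʳ}`. The pair `(W_{fˡ}, W_{gˡ})` is a function of the
weights of `Vˡ` only, hence independent of `(W_{fʳ}, W_{gʳ})`; the identity is then the expansion of
`E[X₁X₂Y₁Y₂] = E[X₁Y₁] E[X₂Y₂]` for independent pairs `(X₁, Y₁)`, `(X₂, Y₂)`.
-/

open MeasureTheory ProbabilityTheory

/-- Weighted model count over variable set `U` with model set `A`. -/
noncomputable def wmc {Ω U : Type*} [Fintype U] (P N : U → Ω → ℝ)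
    (A : Finset (U → Bool)) : Ω → ℝ :=
  fun ω => ∑ a ∈ A, ∏ x, if a x then P x ω else N x ω

namespace ProbabilityTheory

variable {Ω : Type*} [MeasurableSpace Ω] {μ : Measure Ω}

theorem cov_mul_mul_of_indepFun {X₁ Y₁ X₂ Y₂ : Ω → ℝ}
    (hX₁ : AEStronglyMeasurable X₁ μ) (hY₁ : AEStronglyMeasurable Y₁ μ)
    (hX₂ : AEStronglyMeasurable X₂ μ) (hY₂ : AEStronglyMeasurable Y₂ μ)
    (h : IndepFun (fun ω => (X₁ ω, Y₁ ω)) (fun ω => (X₂ ω, Y₂ ω)) μ) :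
    cov μ (X₁ * X₂) (Y₁ * Y₂) =
      cov μ X₁ Y₁ * cov μ X₂ Y₂ + cov μ X₁ Y₁ * (∫ ω, X₂ ω ∂μ) * (∫ ω, Y₂ ω ∂μ) +
        (∫ ω, X₁ ω ∂μ) * (∫ ω, Y₁ ω ∂μ) * cov μ X₂ Y₂ := by
  have hX : IndepFun X₁ X₂ μ := h.comp measurable_fst measurable_fst
  have hY : IndepFun Y₁ Y₂ μ := h.comp measurable_snd measurable_snd
  have hXY : IndepFun (X₁ * Y₁) (X₂ * Y₂) μ :=
    h.comp (measurable_fst.mul measurable_snd) (measurable_fst.mul measurable_snd)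
  have hmul : ∫ ω, (X₁ * X₂) ω * (Y₁ * Y₂) ω ∂μ = ∫ ω, ((X₁ * Y₁) * (X₂ * Y₂)) ω ∂μ := by
    congr 1; funext ω; simp only [Pi.mul_apply]; ring
  unfold cov
  rw [hmul, hXY.integral_mul_eq_mul_integral (hX₁.mul hY₁) (hX₂.mul hY₂),
    hX.integral_mul_eq_mul_integral hX₁ hX₂, hY.integral_mul_eq_mul_integral hY₁ hY₂]
  simp only [Pi.mul_apply]
  ring

theorem iIndepFun.indepFun_inl_inr {ι κ : Type*} [Fintype ι] [Fintype κ] {β : Type*}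
    [MeasurableSpace β] {f : ι ⊕ κ → Ω → β} (hf : iIndepFun f μ) (hmeas : ∀ i, Measurable (f i)) :
    IndepFun (fun ω i => f (Sum.inl i) ω) (fun ω j => f (Sum.inr j) ω) μ := by
  classical
  have hblocks := hf.indepFun_finset (Finset.univ.map .inl) (Finset.univ.map .inr)
    (by simp [Finset.disjoint_left]) hmeas
  exact hblocks.comp (measurable_pi_lambda _ fun i => measurable_pi_apply ⟨Sum.inl i, by simp⟩)
    (measurable_pi_lambda _ fun j => measurable_pi_apply ⟨Sum.inr j, by simp⟩)

end ProbabilityTheory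

section WeightedModelCount

variable {Ω U : Type*} [Fintype U]

theorem measurable_wmc [MeasurableSpace Ω] {P N : U → Ω → ℝ} (hP : ∀ x, Measurable (P x))
    (hN : ∀ x, Measurable (N x)) (A : Finset (U → Bool)) : Measurable (wmc P N A) :=
  Finset.measurable_sum _ fun a _ => Finset.measurable_prod _ fun x _ => by
    cases a x <;> simp [hP x, hN x]

theorem measurable_wmc_pairs (A : Finset (U → Bool)) :
    Measurable (wmc (fun x (v : U → ℝ × ℝ) => (v x).1) (fun x v => (v x).2) A) :=
  measurable_wmc (fun x => (measurable_pi_apply x).fst) (fun x => (measurable_pi_apply x).snd) A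

theorem wmc_filter_sum_mem_and {Ul Ur : Type*}
    [Fintype Ul] [DecidableEq Ul] [Fintype Ur] [DecidableEq Ur] (P N : Ul ⊕ Ur → Ω → ℝ) (Al : Finset (Ul → Bool)) (Ar : Finset (Ur → Bool)) :
    wmc P N (Finset.univ.filter (fun a : (Ul ⊕ Ur) → Bool =>
      (fun x => a (Sum.inl x)) ∈ Al ∧ (fun x => a (Sum.inr x)) ∈ Ar)) =
      wmc (fun x => P (Sum.inl x)) (fun x => N (Sum.inl x)) Al *
        wmc (fun x => P (Sum.inr x)) (fun x => N (Sum.inr x)) Ar := by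
  funext ω
  simp only [wmc, Pi.mul_apply]
  rw [Finset.sum_mul_sum, ← Finset.sum_product']
  exact Finset.sum_equiv (Equiv.sumArrowEquivProdArrow _ _ _)
    (fun _ => by rw [Finset.mem_filter_univ, Finset.mem_product]; rfl)
    fun _ _ => Fintype.prod_sum_type _

end WeightedModelCount

/-- `V = Vl ⊔ Vr` is modeled as the sum type `Vl ⊕ Vr`;
`f = fˡ ∧ fʳ` and `g = gˡ ∧ gʳ` with `fˡ, gˡ` on `Vl` (model sets `Afl, Agl`)
and `fʳ, gʳ` on `Vr` (model sets `Afr, Agr`). -/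
theorem cov_structured_and_general {Ω Vl Vr : Type*} [MeasurableSpace Ω]
    [Fintype Vl] [DecidableEq Vl] [Fintype Vr] [DecidableEq Vr]
    (μ : Measure Ω) (P N : Vl ⊕ Vr → Ω → ℝ)
    (hPmeas : ∀ x, Measurable (P x)) (hNmeas : ∀ x, Measurable (N x))
    (hindep : iIndepFun (fun x ω => (P x ω, N x ω)) μ)
    (Afl Agl : Finset (Vl → Bool)) (Afr Agr : Finset (Vr → Bool))
    (Af Ag : Finset ((Vl ⊕ Vr) → Bool))
    (hAf : Af = Finset.univ.filter (fun a : (Vl ⊕ Vr) → Bool =>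
      (fun x => a (Sum.inl x)) ∈ Afl ∧ (fun x => a (Sum.inr x)) ∈ Afr))
    (hAg : Ag = Finset.univ.filter (fun a : (Vl ⊕ Vr) → Bool =>
      (fun x => a (Sum.inl x)) ∈ Agl ∧ (fun x => a (Sum.inr x)) ∈ Agr)) :
    cov μ (wmc P N Af) (wmc P N Ag) =
      cov μ (wmc (fun x => P (Sum.inl x)) (fun x => N (Sum.inl x)) Afl)
            (wmc (fun x => P (Sum.inl x)) (fun x => N (Sum.inl x)) Agl) *
        cov μ (wmc (fun x => P (Sum.inr x)) (fun x => N (Sum.inr x)) Afr)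
              (wmc (fun x => P (Sum.inr x)) (fun x => N (Sum.inr x)) Agr) +
      cov μ (wmc (fun x => P (Sum.inl x)) (fun x => N (Sum.inl x)) Afl)
            (wmc (fun x => P (Sum.inl x)) (fun x => N (Sum.inl x)) Agl) *
        (∫ ω, wmc (fun x => P (Sum.inr x)) (fun x => N (Sum.inr x)) Afr ω ∂μ) *
        (∫ ω, wmc (fun x => P (Sum.inr x)) (fun x => N (Sum.inr x)) Agr ω ∂μ) +
      (∫ ω, wmc (fun x => P (Sum.inl x)) (fun x => N (Sum.inl x)) Afl ω ∂μ) *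
        (∫ ω, wmc (fun x => P (Sum.inl x)) (fun x => N (Sum.inl x)) Agl ω ∂μ) *
        cov μ (wmc (fun x => P (Sum.inr x)) (fun x => N (Sum.inr x)) Afr)
              (wmc (fun x => P (Sum.inr x)) (fun x => N (Sum.inr x)) Agr) := by
  have hblocks := hindep.indepFun_inl_inr fun x => (hPmeas x).prodMk (hNmeas x)
  have hmeas_l (A : Finset (Vl → Bool)) :=
    measurable_wmc (fun x => hPmeas (Sum.inl x)) (fun x => hNmeas (Sum.inl x)) A
  have hmeas_r (A : Finset (Vr → Bool)) :=
    measurable_wmc (fun x => hPmeas (Sum.inr x)) (fun x => hNmeas (Sum.inr x)) A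
  -- A block count is definitionally the count in `measurable_wmc_pairs`, evaluated at its block.
  have hpairs := hblocks.comp
    ((measurable_wmc_pairs Afl).prodMk (measurable_wmc_pairs Agl))
    ((measurable_wmc_pairs Afr).prodMk (measurable_wmc_pairs Agr))
  rw [hAf, hAg, wmc_filter_sum_mem_and, wmc_filter_sum_mem_and]
  exact cov_mul_mul_of_indepFun (hmeas_l Afl).aestronglyMeasurable
    (hmeas_l Agl).aestronglyMeasurable (hmeas_r Afr).aestronglyMeasurable
    (hmeas_r Agr).aestronglyMeasurable hpairs

/-- Structured conjunction decomposition: `V = Vl ⊔ Vr` is modeled as the sum type `Vl ⊕ Vr`;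
`f = fˡ ∧ fʳ` and `g = gˡ ∧ gʳ` with `fˡ, gˡ` on `Vl` (model sets `Afl, Agl`)
and `fʳ, gʳ` on `Vr` (model sets `Afr, Agr`). -/
theorem cov_structured_and {Ω Vl Vr : Type*} [MeasurableSpace Ω]
    [Fintype Vl] [DecidableEq Vl] [Fintype Vr] [DecidableEq Vr]
    (μ : Measure Ω) [IsProbabilityMeasure μ] (P N : Vl ⊕ Vr → Ω → ℝ)
    (hPmeas : ∀ x, Measurable (P x)) (hNmeas : ∀ x, Measurable (N x))
    (hPbdd : ∀ x, ∃ C, ∀ ω, |P x ω| ≤ C) (hNbdd : ∀ x, ∃ C, ∀ ω, |N x ω| ≤ C)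
    (hindep : iIndepFun (fun x ω => (P x ω, N x ω)) μ)
    (Afl Agl : Finset (Vl → Bool)) (Afr Agr : Finset (Vr → Bool))
    (Af Ag : Finset ((Vl ⊕ Vr) → Bool))
    (hAf : Af = Finset.univ.filter (fun a : (Vl ⊕ Vr) → Bool =>
      (fun x => a (Sum.inl x)) ∈ Afl ∧ (fun x => a (Sum.inr x)) ∈ Afr))
    (hAg : Ag = Finset.univ.filter (fun a : (Vl ⊕ Vr) → Bool =>
      (fun x => a (Sum.inl x)) ∈ Agl ∧ (fun x => a (Sum.inr x)) ∈ Agr)) :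
    cov μ (wmc P N Af) (wmc P N Ag) =
      cov μ (wmc (fun x => P (Sum.inl x)) (fun x => N (Sum.inl x)) Afl)
            (wmc (fun x => P (Sum.inl x)) (fun x => N (Sum.inl x)) Agl) *
        cov μ (wmc (fun x => P (Sum.inr x)) (fun x => N (Sum.inr x)) Afr)
              (wmc (fun x => P (Sum.inr x)) (fun x => N (Sum.inr x)) Agr) +
      cov μ (wmc (fun x => P (Sum.inl x)) (fun x => N (Sum.inl x)) Afl)
            (wmc (fun x => P (Sum.inl x)) (fun x => N (Sum.inl x)) Agl) *
        (∫ ω, wmc (fun x => P (Sum.inr x)) (fun x => N (Sum.inr x)) Afr ω ∂μ) *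
        (∫ ω, wmc (fun x => P (Sum.inr x)) (fun x => N (Sum.inr x)) Agr ω ∂μ) +
      (∫ ω, wmc (fun x => P (Sum.inl x)) (fun x => N (Sum.inl x)) Afl ω ∂μ) *
        (∫ ω, wmc (fun x => P (Sum.inl x)) (fun x => N (Sum.inl x)) Agl ω ∂μ) *
        cov μ (wmc (fun x => P (Sum.inr x)) (fun x => N (Sum.inr x)) Afr)
              (wmc (fun x => P (Sum.inr x)) (fun x => N (Sum.inr x)) Agr) :=
  cov_structured_and_general μ P N hPmeas hNmeas hindep Afl Agl Afr Agr Af Ag hAf hAg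
end
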